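/- arXiv:2411.06177 — 2 statements merged into one kernel-verified Lean document; each statement's English description precedes it below -/
import Mathlib

section
/- Let G be a finite connected simple graph and let v be a vertex of G with nonempty neighborhood. Let G' be the graph obtained from G by duplicating v without an edge, i.e. adding a new vertex v' adjacent exactly to the neighbors of v (and not to v itself). Then P_{G'}((x_u)_{u∈V(G)}, x_{v'}) = P_G((x_u)_{u≠v}, x_v + x_{v'}) · (Σ_{u∈N_G(v)} x_u), where in the first factor the variable of v is replaced by x_v + x_{v'}. -/
open scoped BigOperators

/-- The number of spanning trees of `G`: the number of subgraphs (as simple graphs on the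
same vertex set, with edge set contained in that of `G`) that are trees. -/
noncomputable def treeNum {V : Type*} (G : SimpleGraph V) : ℕ :=
  Nat.card {T : SimpleGraph V // T ≤ G ∧ T.IsTree}

/-- The vertex degree enumerator of `G` evaluated at `x`:
`P_G(x) = ∑_{spanning trees T of G} ∏_v x v ^ (deg_T v - 1)`. -/
noncomputable def degEnum {V : Type*} [Fintype V] (G : SimpleGraph V) (x : V → ℝ) : ℝ :=
  ∑ᶠ T ∈ {T : SimpleGraph V | T ≤ G ∧ T.IsTree},
    ∏ v : V, x v ^ ((T.neighborSet v).ncard - 1)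

/-- Duplication of the vertex `v` without an edge: the new vertex `none` is adjacent
exactly to the neighbors of `v` (and not to `v` itself). -/
def dupNoEdge {V : Type*} (G : SimpleGraph V) (v : V) : SimpleGraph (Option V) where
  Adj a b :=
    match a, b with
    | some u, some w => G.Adj u w
    | some u, none => G.Adj u v
    | none, some w => G.Adj w v
    | none, none => False
  symm := by
    constructor
    rintro (_ | a) (_ | b) h
    · exact h
    · exact h
    · exact h
    · exact h.symm
  loopless := by
    constructor
    rintro (_ | a) h
    · exact h
    · exact G.irrefl h

/-!
Both sides are sums over spanning trees, and the identity comes from a weight-preserving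
bijection; the new vertex `v'` is `none : Option V`. Expanding `(x_v + x_{v'}) ^ (deg_T v - 1)`
by the binomial theorem, a term of the right-hand side is a triple `(T, u, S)`: a spanning tree
`T` of `G`, a neighbour `u` of `v` in `G`, and a set `S` of `T`-neighbours of `v` avoiding the
gateway of `u` (the `T`-neighbour of `v` on the path to `u`), which are `deg_T v - 1` many.
Moving the edges from `v` to `S` over to `v'` and joining `v'` to `u` gives a spanning tree of
`G'` with monomial `x_{v'}^|S| x_v^(deg_T v - 1 - |S|) x_u ∏_{w ≠ v} x_w^(deg_T w - 1)`.
Conversely, in a spanning tree `T'` of `G'` the pivot `u` is the neighbour of `v'` on the path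
to `v`; contracting `v'` into `v` after deleting the edge `v' u` recovers `T`, and the other
neighbours of `v'` recover `S`. That both graphs are trees follows from connectivity and a
count of degrees.
-/

open Finset

namespace SimpleGraph

section General

variable {W : Type*} {T : SimpleGraph W}

lemma Reachable.lift {α β : Type*} {X : SimpleGraph α} {Y : SimpleGraph β} (f : α → β)
    (hf : ∀ a b, X.Adj a b → Y.Reachable (f a) (f b)) {a b : α} (h : X.Reachable a b) :
    Y.Reachable (f a) (f b) := by
  simp only [reachable_iff_reflTransGen] at hf h ⊢
  exact Relation.ReflTransGen.lift' f hf _ _ h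

lemma Walk.reachable_deleteIncidenceSet {p a b : W} (w : T.Walk a b) (hp : p ∉ w.support) :
    (T.deleteIncidenceSet p).Reachable a b := by
  induction w with
  | nil => rfl
  | cons h w ih =>
    simp only [Walk.support_cons, List.mem_cons, not_or] at hp
    refine Adj.reachable ?_ |>.trans (ih hp.2)
    rw [deleteIncidenceSet_adj]
    exact ⟨h, Ne.symm hp.1, fun hp' => hp.2 (hp' ▸ w.start_mem_support)⟩

/-- The neighbour of `p` through which a tree `T` leaves `p` towards `q`. -/
noncomputable def gateway (T : SimpleGraph W) (p q : W) : W :=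
  @Classical.epsilon W ⟨p⟩ fun b => T.Adj p b ∧ (T.deleteIncidenceSet p).Reachable q b

theorem IsTree.existsUnique_gateway (hT : T.IsTree) {p q : W} (hqp : q ≠ p) :
    ∃! b, T.Adj p b ∧ (T.deleteIncidenceSet p).Reachable q b := by
  classical
  obtain ⟨w, hw⟩ := (hT.connected p q).some.toPath
  cases w with
  | nil => exact absurd rfl hqp
  | @cons _ c _ hpc w =>
    rw [Walk.cons_isPath_iff] at hw
    refine ⟨_, ⟨hpc, (w.reachable_deleteIncidenceSet hw.2).symm⟩, ?_⟩
    rintro b ⟨hpb, hqb⟩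
    by_contra hbc
    -- the edge `p b` would not be a bridge: `b` reaches `p` through `q` and the edge `p c`
    have hle : T.deleteIncidenceSet p ≤ T.deleteEdges {s(p, b)} := fun x y hxy => by
      rw [deleteIncidenceSet_adj] at hxy
      simp [hxy.1, hxy.2.1, hxy.2.2]
    have hcp : (T.deleteEdges {s(p, b)}).Adj c p := by
      simp [hpc.symm, Ne.symm hbc, hpc.ne']
    exact isAcyclic_iff_forall_adj_isBridge.1 hT.isAcyclic hpb
      ((hqb.symm.trans (w.reachable_deleteIncidenceSet hw.2).symm).mono hle
        |>.trans hcp.reachable).symm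

theorem IsTree.gateway_spec (hT : T.IsTree) {p q : W} (hqp : q ≠ p) :
    T.Adj p (T.gateway p q) ∧ (T.deleteIncidenceSet p).Reachable q (T.gateway p q) :=
  Classical.epsilon_spec (hT.existsUnique_gateway hqp).exists

theorem IsTree.eq_gateway (hT : T.IsTree) {p q b : W} (hqp : q ≠ p) (hpb : T.Adj p b)
    (hqb : (T.deleteIncidenceSet p).Reachable q b) : b = T.gateway p q :=
  (hT.existsUnique_gateway hqp).unique ⟨hpb, hqb⟩ (hT.gateway_spec hqp)

lemma sum_ncard_neighborSet [Fintype W] (G : SimpleGraph W) :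
    ∑ w, (G.neighborSet w).ncard = 2 * Nat.card G.edgeSet := by
  classical
  rw [Nat.card_eq_fintype_card, ← edgeFinset_card, ← sum_degrees_eq_twice_card_edges]
  simp only [Set.ncard_eq_toFinset_card', Set.toFinset_card, card_neighborSet_eq_degree]

theorem isTree_iff_connected_and_sum_ncard_neighborSet [Fintype W] {G : SimpleGraph W} :
    G.IsTree ↔ G.Connected ∧ ∑ w, (G.neighborSet w).ncard + 2 = 2 * Fintype.card W := by
  rw [isTree_iff_connected_and_card, sum_ncard_neighborSet, Nat.card_eq_fintype_card (α := W)]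
  exact and_congr_right' (by omega)

noncomputable def spanningTrees [Finite W] (G : SimpleGraph W) : Finset (SimpleGraph W) :=
  {T | T ≤ G ∧ T.IsTree}.toFinite.toFinset

@[simp] lemma mem_spanningTrees [Finite W] {G : SimpleGraph W} :
    T ∈ G.spanningTrees ↔ T ≤ G ∧ T.IsTree := by
  simp [spanningTrees]

noncomputable def degMonomial [Fintype W] (T : SimpleGraph W) (x : W → ℝ) : ℝ :=
  ∏ w, x w ^ ((T.neighborSet w).ncard - 1)

lemma degEnum_eq_sum [Fintype W] (G : SimpleGraph W) (x : W → ℝ) :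
    degEnum G x = ∑ T ∈ G.spanningTrees, T.degMonomial x :=
  finsum_mem_eq_finite_toFinset_sum _ _

end General

variable {V : Type*} {T : SimpleGraph V} {T' : SimpleGraph (Option V)} {G : SimpleGraph V}
  {v u w : V} {S : Finset V}

def splitVertex (T : SimpleGraph V) (v u : V) (S : Finset V) : SimpleGraph (Option V) where
  Adj a b := match a, b with
    | some a, some b => T.Adj a b ∧ ¬(a = v ∧ b ∈ S) ∧ ¬(b = v ∧ a ∈ S)
    | some a, none => a ∈ S ∨ a = u
    | none, some b => b ∈ S ∨ b = u
    | none, none => False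
  symm := by
    constructor
    rintro (_ | a) (_ | b) h
    · exact h
    · exact h
    · exact h
    · exact ⟨h.1.symm, h.2.2, h.2.1⟩
  loopless := by
    constructor
    rintro (_ | a) h
    · exact h
    · exact T.irrefl h.1

@[simp] lemma splitVertex_adj_some_some {a b : V} :
    (T.splitVertex v u S).Adj (some a) (some b) ↔
      T.Adj a b ∧ ¬(a = v ∧ b ∈ S) ∧ ¬(b = v ∧ a ∈ S) := .rfl

@[simp] lemma splitVertex_adj_none_some {b : V} :
    (T.splitVertex v u S).Adj none (some b) ↔ b ∈ S ∨ b = u := .rfl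

@[simp] lemma splitVertex_adj_some_none {a : V} :
    (T.splitVertex v u S).Adj (some a) none ↔ a ∈ S ∨ a = u := .rfl

lemma ncard_neighborSet_splitVertex_none [DecidableEq V] (huS : u ∉ S) :
    ((T.splitVertex v u S).neighborSet none).ncard = #S + 1 := by
  have : (T.splitVertex v u S).neighborSet none = some '' ↑(insert u S) := by
    ext (_ | b) <;> simp [or_comm]
  rw [this, Set.ncard_image_of_injective _ (Option.some_injective V), Set.ncard_coe_finset,
    card_insert_of_notMem huS]

lemma ncard_neighborSet_splitVertex_some_self [Finite V] (hS : ↑S ⊆ T.neighborSet v)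
    (huv : u ≠ v) :
    ((T.splitVertex v u S).neighborSet (some v)).ncard = (T.neighborSet v).ncard - #S := by
  have hvS : v ∉ S := fun h => T.irrefl (hS h)
  have : (T.splitVertex v u S).neighborSet (some v) = some '' (T.neighborSet v \ ↑S) := by
    ext (_ | b)
    · simp [hvS, huv.symm]
    · simp only [mem_neighborSet, splitVertex_adj_some_some, Set.mem_image, Set.mem_sdiff,
        Option.some.injEq]
      aesop
  rw [this, Set.ncard_image_of_injective _ (Option.some_injective V),
    Set.ncard_sdiff hS (Set.toFinite _), Set.ncard_coe_finset]

lemma ncard_neighborSet_splitVertex_some_of_ne [Finite V] [DecidableEq V]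
    (hS : ↑S ⊆ T.neighborSet v) (huS : u ∉ S) (hwv : w ≠ v) :
    ((T.splitVertex v u S).neighborSet (some w)).ncard =
      (T.neighborSet w).ncard + if w = u then 1 else 0 := by
  have hvS : v ∉ S := fun h => T.irrefl (hS h)
  have hsome := Set.ncard_image_of_injective (T.neighborSet w) (Option.some_injective V)
  by_cases hwS : w ∈ S
  · have hwu : w ≠ u := fun h => huS (h ▸ hwS)
    have : (T.splitVertex v u S).neighborSet (some w) =
        insert none (some '' (T.neighborSet w \ {v})) := by
      ext (_ | b)
      · simp [hwS]
      · simp only [mem_neighborSet, splitVertex_adj_some_some, Set.mem_insert_iff,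
          Set.mem_image, Set.mem_sdiff, Set.mem_singleton_iff, Option.some.injEq]
        aesop
    have hvw : v ∈ T.neighborSet w := (hS hwS).symm
    rw [this, Set.ncard_insert_of_notMem (by simp) (Set.toFinite _),
      Set.ncard_image_of_injective _ (Option.some_injective V),
      Set.ncard_sdiff_singleton_of_mem hvw, if_neg hwu, add_zero,
      Nat.sub_add_cancel ((Set.ncard_pos (Set.toFinite _)).2 ⟨v, hvw⟩)]
  by_cases hwu : w = u
  · subst hwu
    have : (T.splitVertex v w S).neighborSet (some w) = insert none (some '' T.neighborSet w) := by
      ext (_ | b) <;> simp [hwv, hwS]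
    rw [this, Set.ncard_insert_of_notMem (by simp) (Set.toFinite _), hsome, if_pos rfl]
  · have : (T.splitVertex v u S).neighborSet (some w) = some '' T.neighborSet w := by
      ext (_ | b) <;> simp [hwv, hwS, hwu]
    rw [this, hsome, if_neg hwu, add_zero]

lemma sum_ncard_neighborSet_splitVertex [Fintype V] [DecidableEq V] (hS : ↑S ⊆ T.neighborSet v)
    (huS : u ∉ S) (huv : u ≠ v) :
    ∑ o, ((T.splitVertex v u S).neighborSet o).ncard = ∑ w, (T.neighborSet w).ncard + 2 := by
  have hcard : #S ≤ (T.neighborSet v).ncard := by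
    rw [← Set.ncard_coe_finset]
    exact Set.ncard_le_ncard hS
  rw [Fintype.sum_option, ← add_sum_erase _ _ (mem_univ v), ← add_sum_erase _ _ (mem_univ v),
    ncard_neighborSet_splitVertex_none huS, ncard_neighborSet_splitVertex_some_self hS huv,
    sum_congr rfl fun _ hw => ncard_neighborSet_splitVertex_some_of_ne hS huS (ne_of_mem_erase hw),
    sum_add_distrib, sum_ite_eq' _ u, if_pos (mem_erase.2 ⟨huv, mem_univ u⟩)]
  omega

lemma degMonomial_splitVertex [Fintype V] [DecidableEq V] (hS : ↑S ⊆ T.neighborSet v)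
    (huS : u ∉ S) (huv : u ≠ v) (hu : 1 ≤ (T.neighborSet u).ncard) (x : V → ℝ) (y : ℝ) :
    (T.splitVertex v u S).degMonomial (fun o => o.elim y x) =
      y ^ #S * x v ^ ((T.neighborSet v).ncard - 1 - #S) *
        (x u * ∏ w ∈ univ.erase v, x w ^ ((T.neighborSet w).ncard - 1)) := by
  have hpow : ∀ w ∈ univ.erase v,
      x w ^ (((T.splitVertex v u S).neighborSet (some w)).ncard - 1) =
        x w ^ ((T.neighborSet w).ncard - 1) * if w = u then x w else 1 := fun w hw => by
    rw [ncard_neighborSet_splitVertex_some_of_ne hS huS (ne_of_mem_erase hw)]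
    split_ifs with hwu
    · subst hwu
      rw [← pow_succ, Nat.sub_add_cancel hu, Nat.add_sub_cancel]
    · rw [add_zero, mul_one]
  rw [degMonomial, Fintype.prod_option, ← mul_prod_erase _ _ (mem_univ v)]
  simp only [Option.elim]
  rw [prod_congr rfl hpow, prod_mul_distrib, prod_ite_eq' _ u,
    if_pos (mem_erase.2 ⟨huv, mem_univ u⟩), ncard_neighborSet_splitVertex_none huS,
    ncard_neighborSet_splitVertex_some_self hS huv, Nat.add_sub_cancel, Nat.sub_right_comm]
  ring

noncomputable def movableNeighbors [Finite V] (T : SimpleGraph V) (v u : V) : Finset V :=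
  (T.neighborSet v \ {T.gateway v u}).toFinite.toFinset

@[simp] lemma mem_movableNeighbors [Finite V] {b : V} :
    b ∈ T.movableNeighbors v u ↔ T.Adj v b ∧ b ≠ T.gateway v u := by
  simp [movableNeighbors]

lemma coe_subset_neighborSet_of_subset_movableNeighbors [Finite V]
    (hS : S ⊆ T.movableNeighbors v u) : ↑S ⊆ T.neighborSet v :=
  fun _ hb => (mem_movableNeighbors.1 (hS hb)).1

lemma gateway_notMem_of_subset_movableNeighbors [Finite V] (hS : S ⊆ T.movableNeighbors v u) :
    T.gateway v u ∉ S :=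
  fun h => (mem_movableNeighbors.1 (hS h)).2 rfl

lemma IsTree.notMem_movableNeighbors [Finite V] (hT : T.IsTree) (huv : u ≠ v) :
    u ∉ T.movableNeighbors v u := by
  rw [mem_movableNeighbors, not_and_not_right]
  exact fun hvu => hT.eq_gateway huv hvu .rfl

lemma IsTree.notMem_of_subset_movableNeighbors [Finite V] (hT : T.IsTree) (huv : u ≠ v)
    (hS : S ⊆ T.movableNeighbors v u) : u ∉ S :=
  fun h => hT.notMem_movableNeighbors huv (hS h)

lemma IsTree.card_movableNeighbors [Finite V] (hT : T.IsTree) (huv : u ≠ v) :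
    #(T.movableNeighbors v u) = (T.neighborSet v).ncard - 1 := by
  rw [movableNeighbors, ← Set.ncard_eq_toFinset_card _ (Set.toFinite _),
    Set.ncard_sdiff_singleton_of_mem (show _ ∈ T.neighborSet v from (hT.gateway_spec huv).1)]

lemma IsTree.one_le_ncard_neighborSet [Finite V] (hT : T.IsTree) (huv : u ≠ v) :
    1 ≤ (T.neighborSet u).ncard :=
  (Set.ncard_pos (Set.toFinite _)).2 ⟨_, (hT.gateway_spec huv.symm).1⟩

lemma Reachable.splitVertex_deleteIncidenceSet {a b : V}
    (h : (T.deleteIncidenceSet v).Reachable a b) :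
    ((T.splitVertex v u S).deleteIncidenceSet none).Reachable (some a) (some b) :=
  h.lift some fun a b hab => Adj.reachable <| by
    rw [deleteIncidenceSet_adj] at hab
    simp [deleteIncidenceSet_adj, hab.1, hab.2.1, hab.2.2]

lemma IsTree.reachable_splitVertex_deleteIncidenceSet [Finite V] (hT : T.IsTree) (huv : u ≠ v)
    (hS : S ⊆ T.movableNeighbors v u) :
    ((T.splitVertex v u S).deleteIncidenceSet none).Reachable (some v) (some u) := by
  obtain ⟨hvc, hcu⟩ := hT.gateway_spec huv
  have hc :
      ((T.splitVertex v u S).deleteIncidenceSet none).Adj (some v) (some (T.gateway v u)) := by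
    simp [deleteIncidenceSet_adj, hvc, gateway_notMem_of_subset_movableNeighbors hS, hvc.ne']
  exact hc.reachable.trans hcu.symm.splitVertex_deleteIncidenceSet

lemma IsTree.splitVertex_connected [Finite V] (hT : T.IsTree) (huv : u ≠ v)
    (hS : S ⊆ T.movableNeighbors v u) : (T.splitVertex v u S).Connected := by
  have hnone : (T.splitVertex v u S).Reachable (some v) none :=
    (hT.reachable_splitVertex_deleteIncidenceSet huv hS).mono (deleteIncidenceSet_le _ _)
      |>.trans (Adj.reachable (by simp))
  have hsome : ∀ a b, T.Adj a b → (T.splitVertex v u S).Reachable (some a) (some b) := by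
    intro a b hab
    by_cases hbS : a = v ∧ b ∈ S
    · obtain ⟨rfl, hb⟩ := hbS
      exact hnone.trans (Adj.reachable (by simp [hb]))
    by_cases haS : b = v ∧ a ∈ S
    · obtain ⟨rfl, ha⟩ := haS
      exact (Adj.reachable (by simp [ha])).trans hnone.symm
    exact Adj.reachable ⟨hab, hbS, haS⟩
  refine (connected_iff_exists_forall_reachable _).2 ⟨some v, ?_⟩
  rintro (_ | a)
  · exact hnone
  · exact ((hT.connected v a).lift some hsome)

theorem IsTree.splitVertex_isTree [Fintype V] [DecidableEq V] (hT : T.IsTree) (huv : u ≠ v)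
    (hS : S ⊆ T.movableNeighbors v u) : (T.splitVertex v u S).IsTree := by
  have hsum := (isTree_iff_connected_and_sum_ncard_neighborSet.1 hT).2
  refine isTree_iff_connected_and_sum_ncard_neighborSet.2 ⟨hT.splitVertex_connected huv hS, ?_⟩
  rw [sum_ncard_neighborSet_splitVertex (coe_subset_neighborSet_of_subset_movableNeighbors hS)
    (hT.notMem_of_subset_movableNeighbors huv hS) huv, Fintype.card_option]
  omega

lemma splitVertex_le (hle : T ≤ G) (hu : G.Adj v u) (hS : ↑S ⊆ T.neighborSet v) :
    T.splitVertex v u S ≤ dupNoEdge G v := by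
  rintro (_ | a) (_ | b) h
  · exact h.elim
  · obtain hb | rfl := splitVertex_adj_none_some.1 h
    exacts [(hle (hS hb)).symm, hu.symm]
  · obtain ha | rfl := splitVertex_adj_some_none.1 h
    exacts [(hle (hS ha)).symm, hu.symm]
  · exact hle h.1

/-- The neighbour of `none` on its path to `some v`; the default `v` only matters off trees. -/
noncomputable def pivot (T' : SimpleGraph (Option V)) (v : V) : V :=
  (T'.gateway none (some v)).getD v

noncomputable def movedNeighbors [Finite V] (T' : SimpleGraph (Option V)) (v : V) : Finset V :=
  {b | T'.Adj none (some b) ∧ b ≠ T'.pivot v}.toFinite.toFinset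

@[simp] lemma mem_movedNeighbors [Finite V] {T' : SimpleGraph (Option V)} {b : V} :
    b ∈ T'.movedNeighbors v ↔ T'.Adj none (some b) ∧ b ≠ T'.pivot v := by
  simp [movedNeighbors]

def mergeVertex [Finite V] (T' : SimpleGraph (Option V)) (v : V) : SimpleGraph V where
  Adj a b := a ≠ b ∧ (T'.Adj (some a) (some b) ∨
    (a = v ∧ b ∈ T'.movedNeighbors v) ∨ (b = v ∧ a ∈ T'.movedNeighbors v))
  symm := by
    constructor
    rintro a b ⟨hne, h | h | h⟩
    · exact ⟨hne.symm, Or.inl h.symm⟩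
    · exact ⟨hne.symm, Or.inr (Or.inr h)⟩
    · exact ⟨hne.symm, Or.inr (Or.inl h)⟩
  loopless := ⟨fun _ h => h.1 rfl⟩

lemma mergeVertex_adj [Finite V] {T' : SimpleGraph (Option V)} {a b : V} :
    (T'.mergeVertex v).Adj a b ↔ a ≠ b ∧ (T'.Adj (some a) (some b) ∨
      (a = v ∧ b ∈ T'.movedNeighbors v) ∨ (b = v ∧ a ∈ T'.movedNeighbors v)) := .rfl

lemma IsTree.some_pivot (hT' : T'.IsTree) : some (T'.pivot v) = T'.gateway none (some v) := by
  have hadj := (hT'.gateway_spec (p := none) (q := some v) (Option.some_ne_none v)).1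
  cases hg : T'.gateway none (some v) with
  | none => exact absurd (hg ▸ hadj) T'.irrefl
  | some b => simp [pivot, hg]

lemma IsTree.adj_pivot (hT' : T'.IsTree) : T'.Adj none (some (T'.pivot v)) :=
  hT'.some_pivot ▸ (hT'.gateway_spec (Option.some_ne_none v)).1

lemma IsTree.reachable_pivot (hT' : T'.IsTree) :
    (T'.deleteIncidenceSet none).Reachable (some v) (some (T'.pivot v)) :=
  hT'.some_pivot ▸ (hT'.gateway_spec (Option.some_ne_none v)).2

lemma IsTree.eq_pivot (hT' : T'.IsTree) {b : V} (hb : T'.Adj none (some b))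
    (hvb : (T'.deleteIncidenceSet none).Reachable (some v) (some b)) : b = T'.pivot v :=
  Option.some_injective V <| hT'.some_pivot ▸ hT'.eq_gateway (Option.some_ne_none v) hb hvb

theorem IsTree.pivot_splitVertex [Fintype V] [DecidableEq V] (hT : T.IsTree) (huv : u ≠ v)
    (hS : S ⊆ T.movableNeighbors v u) : (T.splitVertex v u S).pivot v = u :=
  ((hT.splitVertex_isTree huv hS).eq_pivot (by simp)
    (hT.reachable_splitVertex_deleteIncidenceSet huv hS)).symm

lemma movedNeighbors_splitVertex [Finite V] (hpivot : (T.splitVertex v u S).pivot v = u)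
    (huS : u ∉ S) : (T.splitVertex v u S).movedNeighbors v = S := by
  ext b
  simp only [mem_movedNeighbors, splitVertex_adj_none_some, hpivot]
  exact ⟨fun ⟨hb, hbu⟩ => hb.resolve_right hbu, fun hb => ⟨.inl hb, fun h => huS (h ▸ hb)⟩⟩

lemma mergeVertex_splitVertex [Finite V] (hS : ↑S ⊆ T.neighborSet v)
    (hmoved : (T.splitVertex v u S).movedNeighbors v = S) :
    (T.splitVertex v u S).mergeVertex v = T := by
  ext a b
  rw [mergeVertex_adj, hmoved, splitVertex_adj_some_some]
  constructor
  · rintro ⟨-, ⟨h, -⟩ | ⟨rfl, hb⟩ | ⟨rfl, ha⟩⟩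
    · exact h
    · exact hS hb
    · exact (hS ha).symm
  · exact fun h => ⟨h.ne, by tauto⟩

lemma mergeVertex_le [Finite V] (hle : T' ≤ dupNoEdge G v) : T'.mergeVertex v ≤ G := by
  rintro a b ⟨-, h | ⟨rfl, hb⟩ | ⟨rfl, ha⟩⟩
  · exact hle h
  · exact (show G.Adj b a from hle (mem_movedNeighbors.1 hb).1).symm
  · exact (show G.Adj a b from hle (mem_movedNeighbors.1 ha).1)

lemma mergeVertex_adj_of_mem_movedNeighbors [Finite V] (hle : T' ≤ dupNoEdge G v) {b : V}
    (hb : b ∈ T'.movedNeighbors v) : (T'.mergeVertex v).Adj v b :=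
  ⟨(show G.Adj b v from hle (mem_movedNeighbors.1 hb).1).ne', .inr (.inl ⟨rfl, hb⟩)⟩

theorem IsTree.splitVertex_mergeVertex [Finite V] (hT' : T'.IsTree) :
    (T'.mergeVertex v).splitVertex v (T'.pivot v) (T'.movedNeighbors v) = T' := by
  -- a common neighbour of `none` and `some v` must be the pivot, since `T'` has no cycle
  have hpivot : ∀ b, T'.Adj (some v) (some b) → b ∉ T'.movedNeighbors v := fun b hvb hb =>
    (mem_movedNeighbors.1 hb).2 <| hT'.eq_pivot (mem_movedNeighbors.1 hb).1 <|
      Adj.reachable (by simp [deleteIncidenceSet_adj, hvb])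
  have hnone : ∀ b, b ∈ T'.movedNeighbors v ∨ b = T'.pivot v ↔ T'.Adj none (some b) := by
    intro b
    rw [mem_movedNeighbors]
    by_cases hb : b = T'.pivot v
    · simp [hb, hT'.adj_pivot]
    · simp [hb]
  ext (_ | a) (_ | b)
  · simp
  · exact hnone b
  · exact (hnone a).trans (T'.adj_comm _ _)
  · rw [splitVertex_adj_some_some, mergeVertex_adj]
    constructor
    · rintro ⟨⟨-, h | h | h⟩, hab, hba⟩
      exacts [h, (hab h).elim, (hba h).elim]
    · intro h
      refine ⟨⟨h.ne ∘ congrArg some, .inl h⟩, ?_, ?_⟩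
      · rintro ⟨rfl, hb⟩
        exact hpivot b h hb
      · rintro ⟨rfl, ha⟩
        exact hpivot a h.symm ha

lemma Reachable.mergeVertex_of_deleteIncidenceSet [Finite V] {a b : V}
    (h : (T'.deleteIncidenceSet none).Reachable (some a) (some b)) :
    (T'.mergeVertex v).Reachable a b :=
  h.lift (fun o => o.elim v id) fun o o' hoo' => by
    obtain ⟨hadj, ho, ho'⟩ := deleteIncidenceSet_adj.1 hoo'
    obtain _ | a := o
    · exact (ho rfl).elim
    obtain _ | b := o'
    · exact (ho' rfl).elim
    exact Adj.reachable ⟨fun hab => hadj.ne (congrArg some hab), .inl hadj⟩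

lemma Reachable.deleteIncidenceSet_of_mergeVertex [Finite V] {a b : V}
    (h : ((T'.mergeVertex v).deleteIncidenceSet v).Reachable a b) :
    (T'.deleteIncidenceSet none).Reachable (some a) (some b) :=
  h.lift some fun a b hab => by
    obtain ⟨⟨-, h | h | h⟩, hav, hbv⟩ := deleteIncidenceSet_adj.1 hab
    · exact Adj.reachable (deleteIncidenceSet_adj.2 ⟨h, by simp, by simp⟩)
    · exact (hav h.1).elim
    · exact (hbv h.1).elim

lemma IsTree.mergeVertex_connected [Finite V] (hT' : T'.IsTree) (hle : T' ≤ dupNoEdge G v) :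
    (T'.mergeVertex v).Connected := by
  have hcollapse : ∀ o o', T'.Adj o o' →
      (T'.mergeVertex v).Reachable (o.elim v id) (o'.elim v id) := by
    have hnone : ∀ b, T'.Adj none (some b) → (T'.mergeVertex v).Reachable v b := fun b hb => by
      by_cases hbp : b = T'.pivot v
      · exact hbp ▸ hT'.reachable_pivot.mergeVertex_of_deleteIncidenceSet
      · exact (mergeVertex_adj_of_mem_movedNeighbors hle
          (mem_movedNeighbors.2 ⟨hb, hbp⟩)).reachable
    rintro (_ | a) (_ | b) h
    · exact (T'.irrefl h).elim
    · exact hnone b h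
    · exact (hnone a h.symm).symm
    · exact Adj.reachable ⟨fun hab => h.ne (congrArg some hab), .inl h⟩
  exact (connected_iff_exists_forall_reachable _).2
    ⟨v, fun a => (hT'.connected (some v) (some a)).lift _ hcollapse⟩

lemma IsTree.adj_pivot_of_le (hT' : T'.IsTree) (hle : T' ≤ dupNoEdge G v) :
    G.Adj v (T'.pivot v) :=
  (show G.Adj (T'.pivot v) v from hle hT'.adj_pivot).symm

theorem IsTree.mergeVertex_isTree [Fintype V] [DecidableEq V] (hT' : T'.IsTree)
    (hle : T' ≤ dupNoEdge G v) : (T'.mergeVertex v).IsTree := by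
  have hsum := (isTree_iff_connected_and_sum_ncard_neighborSet.1 hT').2
  refine isTree_iff_connected_and_sum_ncard_neighborSet.2 ⟨hT'.mergeVertex_connected hle, ?_⟩
  rw [← hT'.splitVertex_mergeVertex (v := v), sum_ncard_neighborSet_splitVertex
    (T := T'.mergeVertex v) (fun _ hb => mergeVertex_adj_of_mem_movedNeighbors hle hb)
    (fun h => (mem_movedNeighbors.1 h).2 rfl) (hT'.adj_pivot_of_le hle).ne',
    Fintype.card_option] at hsum
  omega

theorem IsTree.movedNeighbors_subset_movableNeighbors [Fintype V] [DecidableEq V]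
    (hT' : T'.IsTree) (hle : T' ≤ dupNoEdge G v) :
    T'.movedNeighbors v ⊆ (T'.mergeVertex v).movableNeighbors v (T'.pivot v) := by
  intro b hb
  refine mem_movableNeighbors.2 ⟨mergeVertex_adj_of_mem_movedNeighbors hle hb, fun hbc => ?_⟩
  -- as the gateway, `b` would be reached from `some v` avoiding `none`, so it would be the pivot
  obtain ⟨hnone, hbp⟩ := mem_movedNeighbors.1 hb
  have hpc := ((hT'.mergeVertex_isTree hle).gateway_spec (hT'.adj_pivot_of_le hle).ne').2
  exact hbp <| hT'.eq_pivot hnone <|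
    hT'.reachable_pivot.trans (hbc ▸ hpc.deleteIncidenceSet_of_mergeVertex)

lemma IsTree.degMonomial_update_mul_eq_sum [Fintype V] [DecidableEq V] (hT : T.IsTree)
    (huv : u ≠ v) (x : V → ℝ) (y : ℝ) :
    T.degMonomial (Function.update x v (x v + y)) * x u =
      ∑ S ∈ (T.movableNeighbors v u).powerset,
        y ^ #S * x v ^ ((T.neighborSet v).ncard - 1 - #S) *
          (x u * ∏ w ∈ univ.erase v, x w ^ ((T.neighborSet w).ncard - 1)) := by
  rw [degMonomial, ← mul_prod_erase _ _ (mem_univ v), Function.update_self,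
    prod_congr rfl fun w hw => by rw [Function.update_of_ne (ne_of_mem_erase hw)],
    ← hT.card_movableNeighbors huv, add_comm (x v) y, ← sum_pow_mul_eq_add_pow, sum_mul,
    sum_mul]
  exact sum_congr rfl fun S _ => by ring

theorem sum_spanningTrees_dupNoEdge [Fintype V] [DecidableEq V] {M : Type*} [AddCommMonoid M]
    (G : SimpleGraph V) (v : V) (f : SimpleGraph (Option V) → M) :
    ∑ T' ∈ (dupNoEdge G v).spanningTrees, f T' =
      ∑ T ∈ G.spanningTrees, ∑ u ∈ (G.neighborSet v).toFinite.toFinset,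
        ∑ S ∈ (T.movableNeighbors v u).powerset, f (T.splitVertex v u S) := by
  rw [← sum_product', sum_sigma']
  symm
  refine sum_nbij' (fun q => q.1.1.splitVertex v q.1.2 q.2)
    (fun T' => ⟨(T'.mergeVertex v, T'.pivot v), T'.movedNeighbors v⟩) ?_ ?_ ?_ ?_
    fun _ _ => rfl
  all_goals simp only [mem_sigma, mem_product, mem_spanningTrees, Set.Finite.mem_toFinset,
    mem_neighborSet, mem_powerset]
  · rintro ⟨⟨T, u⟩, S⟩ ⟨⟨⟨hle, hT⟩, hu⟩, hS⟩
    exact ⟨splitVertex_le hle hu (coe_subset_neighborSet_of_subset_movableNeighbors hS),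
      hT.splitVertex_isTree hu.ne' hS⟩
  · rintro T' ⟨hle, hT'⟩
    exact ⟨⟨⟨mergeVertex_le hle, hT'.mergeVertex_isTree hle⟩, hT'.adj_pivot_of_le hle⟩,
      hT'.movedNeighbors_subset_movableNeighbors hle⟩
  · rintro ⟨⟨T, u⟩, S⟩ ⟨⟨⟨-, hT⟩, hu⟩, hS⟩
    have hpivot := hT.pivot_splitVertex hu.ne' hS
    have hmoved :=
      movedNeighbors_splitVertex hpivot (hT.notMem_of_subset_movableNeighbors hu.ne' hS)
    rw [hpivot, hmoved,
      mergeVertex_splitVertex (coe_subset_neighborSet_of_subset_movableNeighbors hS) hmoved]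
  · rintro T' ⟨-, hT'⟩
    exact hT'.splitVertex_mergeVertex

end SimpleGraph

open SimpleGraph

theorem stmt7_general {V : Type*} [Fintype V] [DecidableEq V] (G : SimpleGraph V)
    (v : V) (x : V → ℝ) (xv' : ℝ) :
    degEnum (dupNoEdge G v) (fun o => o.elim xv' x) =
      degEnum G (Function.update x v (x v + xv')) * (∑ᶠ u ∈ G.neighborSet v, x u) := by
  rw [degEnum_eq_sum, degEnum_eq_sum, finsum_mem_eq_finite_toFinset_sum _ (Set.toFinite _),
    sum_mul_sum, sum_spanningTrees_dupNoEdge]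
  refine sum_congr rfl fun T hT => sum_congr rfl fun u hu => ?_
  obtain ⟨-, hT⟩ := mem_spanningTrees.1 hT
  have huv : u ≠ v := ((Set.Finite.mem_toFinset _).1 hu).ne'
  rw [hT.degMonomial_update_mul_eq_sum huv]
  refine sum_congr rfl fun S hS => ?_
  rw [mem_powerset] at hS
  exact degMonomial_splitVertex (coe_subset_neighborSet_of_subset_movableNeighbors hS)
    (hT.notMem_of_subset_movableNeighbors huv hS) huv (hT.one_le_ncard_neighborSet huv) x xv'

theorem stmt7 {V : Type*} [Fintype V] [DecidableEq V] (G : SimpleGraph V)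
    (hG : G.Connected) (v : V) (hN : (G.neighborSet v).Nonempty) (x : V → ℝ) (xv' : ℝ) :
    degEnum (dupNoEdge G v) (fun o => o.elim xv' x) =
      degEnum G (Function.update x v (x v + xv')) * (∑ᶠ u ∈ G.neighborSet v, x u) :=
  stmt7_general G v x xv'
end

section
/- For the complete bipartite graph K_{s,t} with parts of sizes s ≥ 1 and t ≥ 1 and variables X_1, …, X_s on one part and Y_1, …, Y_t on the other, the vertex degree enumerator satisfies P_{K_{s,t}}(X_1, …, X_s, Y_1, …, Y_t) = (X_1 + ⋯ + X_s)^{t−1} · (Y_1 + ⋯ + Y_t)^{s−1}. -/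
open scoped BigOperators

/-!
Group the spanning trees of `K_{A,B}` by their degrees, `d` on `A` and `e` on `B`. The trees with
given degrees are equinumerous with pairs of words, one of length `|B| - 1` over `A` in which
each `a` occurs `d a - 1` times and one of length `|A| - 1` over `B` in which each `b` occurs
`e b - 1` times. Both counts satisfy the same recursion: removing a leaf `b₀ ∈ B` hanging at
`a ∈ A` matches removing a last letter `a` (and symmetrically). When no side with at least two
vertices has a vertex of prescribed degree one, both counts vanish unless `|A| = |B| = 1`:
a tree with an edge has two leaves, and a word in which every letter occurs is at least as long
as its alphabet. Summing `∏ X a ^ (d a - 1) * ∏ Y b ^ (e b - 1)` over pairs of words gives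
`(∑ X) ^ (|B| - 1) * (∑ Y) ^ (|A| - 1)`.
-/

open Finset

namespace SimpleGraph

variable {V : Type*}

/-- A tree in `H` on the vertex set `S`, encoded as a graph on all of `V` in which the vertices
outside `S` are isolated. -/
structure IsSpanningTreeOn (T H : SimpleGraph V) (S : Finset V) : Prop where
  le : T ≤ H
  isAcyclic : T.IsAcyclic
  reachable : ∀ v ∈ S, ∀ w ∈ S, T.Reachable v w
  left_mem_of_adj : ∀ ⦃v w⦄, T.Adj v w → v ∈ S

variable {T T' H : SimpleGraph V} {S : Finset V} {u v w v0 u0 : V}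

lemma IsAcyclic.exists_ne_ncard_neighborSet_eq_one [Finite V] (hT : T.IsAcyclic)
    (huv : T.Adj u v) :
    ∃ x y, x ≠ y ∧ (T.neighborSet x).ncard = 1 ∧ (T.neighborSet y).ncard = 1 := by
  have : Nonempty V := ⟨u⟩
  obtain ⟨x, y, p, hp, hmax⟩ := Walk.exists_isPath_forall_isPath_length_le_length T
  have hnil : ¬p.Nil := fun h => by
    have := hmax _ _ _ (Path.singleton huv).2
    simp [Walk.length_eq_zero_iff.2 h] at this
  refine ⟨x, y, hp.nil_iff_eq.not.1 hnil, Set.ncard_eq_one.2 ⟨p.snd, ?_⟩,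
    Set.ncard_eq_one.2 ⟨p.penultimate, ?_⟩⟩ <;> ext z <;>
    simp only [mem_neighborSet, Set.mem_singleton_iff]
  · refine ⟨fun hz => hT.eq_snd_of_adj_start hp hz ?_, fun h => h ▸ p.adj_snd hnil⟩
    by_contra hzp
    have := hmax _ _ (Walk.cons hz.symm p) (hp.cons hzp)
    simp at this
  · refine ⟨fun hz => hT.eq_penultimate_of_adj_end hp hz ?_,
      fun h => h ▸ (p.adj_penultimate hnil).symm⟩
    by_contra hzp
    have := hmax _ _ (p.concat hz) (hp.concat hzp hz)
    simp at this

namespace IsSpanningTreeOn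

lemma right_mem_of_adj (hT : T.IsSpanningTreeOn H S) (h : T.Adj v w) : w ∈ S :=
  hT.left_mem_of_adj h.symm

lemma exists_ne_ncard_neighborSet_eq_one [Finite V] (hT : T.IsSpanningTreeOn H S)
    (hv : v ∈ S) (hw : w ∈ S) (hvw : v ≠ w) :
    ∃ x ∈ S, ∃ y ∈ S, x ≠ y ∧
      (T.neighborSet x).ncard = 1 ∧ (T.neighborSet y).ncard = 1 := by
  obtain ⟨p⟩ := hT.reachable v hv w hw
  obtain ⟨x, y, hxy, hx, hy⟩ :=
    hT.isAcyclic.exists_ne_ncard_neighborSet_eq_one (p.adj_snd fun h => hvw h.eq)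
  have mem_of_ncard : ∀ z, (T.neighborSet z).ncard = 1 → z ∈ S := fun z hz => by
    obtain ⟨z', hz'⟩ := Set.ncard_eq_one.1 hz
    exact hT.left_mem_of_adj (show z' ∈ T.neighborSet z by simp [hz'])
  exact ⟨x, mem_of_ncard x hx, y, mem_of_ncard y hy, hxy, hx, hy⟩

end IsSpanningTreeOn

lemma isSpanningTreeOn_singleton_iff : T.IsSpanningTreeOn H {v} ↔ T = ⊥ := by
  refine ⟨fun hT => ?_, ?_⟩
  · ext x y
    refine ⟨fun h => ?_, fun h => h.elim⟩
    have hx := Finset.mem_singleton.1 (hT.left_mem_of_adj h)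
    have hy := Finset.mem_singleton.1 (hT.right_mem_of_adj h)
    exact h.ne (hx.trans hy.symm)
  · rintro rfl
    exact ⟨bot_le, isAcyclic_bot, by simp, fun _ _ h => h.elim⟩

lemma isSpanningTreeOn_univ_iff [Fintype V] [Nonempty V] :
    T.IsSpanningTreeOn H univ ↔ T ≤ H ∧ T.IsTree := by
  refine ⟨fun hT => ⟨hT.le, (isTree_iff T).2 ⟨(connected_iff T).2 ⟨fun v w =>
    hT.reachable v (mem_univ v) w (mem_univ w), inferInstance⟩, hT.isAcyclic⟩⟩,
    fun ⟨hle, hT⟩ => ⟨hle, hT.isAcyclic, fun v _ w _ => hT.connected.preconnected v w,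
      fun v _ _ => mem_univ v⟩⟩

lemma neighborSet_sup_edge_left (hT' : ∀ z, ¬T'.Adj v0 z) (hne : v0 ≠ u0) :
    (T' ⊔ edge v0 u0).neighborSet v0 = {u0} := by
  ext z
  simp only [mem_neighborSet, sup_adj, edge_adj, Set.mem_singleton_iff]
  grind

lemma ncard_neighborSet_sup_edge [Finite V] [DecidableEq V] (hT' : ∀ z, ¬T'.Adj v0 z)
    (hne : v0 ≠ u0) :
    ((T' ⊔ edge v0 u0).neighborSet w).ncard =
      (T'.neighborSet w).ncard + if w = v0 ∨ w = u0 then 1 else 0 := by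
  by_cases hw0 : w = v0
  · subst hw0
    have : T'.neighborSet w = ∅ := Set.eq_empty_of_forall_notMem hT'
    rw [neighborSet_sup_edge_left hT' hne, this]
    simp
  by_cases hwu : w = u0
  · subst hwu
    have hnb : (T' ⊔ edge v0 w).neighborSet w = insert v0 (T'.neighborSet w) := by
      ext z
      simp only [mem_neighborSet, sup_adj, edge_adj, Set.mem_insert_iff]
      grind
    rw [hnb, Set.ncard_insert_of_notMem (show v0 ∉ T'.neighborSet w from fun h => hT' w h.symm)]
    simp
  · have hnb : (T' ⊔ edge v0 u0).neighborSet w = T'.neighborSet w := by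
      ext z
      simp only [mem_neighborSet, sup_adj, edge_adj]
      grind
    simp [hnb, hw0, hwu]

lemma deleteEdges_sup_edge (h : T.Adj v0 u0) : T.deleteEdges {s(v0, u0)} ⊔ edge v0 u0 = T := by
  ext a b
  simp only [sup_adj, deleteEdges_adj, edge_adj, Set.mem_singleton_iff, Sym2.eq_iff]
  grind [Adj.ne, Adj.symm]

lemma sup_edge_deleteEdges (h : ¬T.Adj v0 u0) :
    (T ⊔ edge v0 u0).deleteEdges {s(v0, u0)} = T := by
  ext a b
  simp only [sup_adj, deleteEdges_adj, edge_adj, Set.mem_singleton_iff, Sym2.eq_iff]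
  grind [Adj.symm]

lemma IsSpanningTreeOn.sup_edge [DecidableEq V] (hT' : T'.IsSpanningTreeOn H S) (hv0 : v0 ∉ S)
    (hu0 : u0 ∈ S) (hadj : H.Adj v0 u0) :
    (T' ⊔ edge v0 u0).IsSpanningTreeOn H (insert v0 S) := by
  have hne : v0 ≠ u0 := hadj.ne
  have hreach : ∀ v ∈ insert v0 S, (T' ⊔ edge v0 u0).Reachable v u0 := by
    intro v hv
    rcases Finset.mem_insert.1 hv with rfl | hv
    · exact Adj.reachable (by simp [edge_adj, hne])
    · exact (hT'.reachable v hv u0 hu0).mono le_sup_left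
  refine ⟨sup_le hT'.le ((edge_le_iff H).2 (Or.inr hadj)), ?_, fun v hv w hw =>
    (hreach v hv).trans (hreach w hw).symm, fun v w h => ?_⟩
  · refine hT'.isAcyclic.sup_edge_of_not_reachable fun ⟨p⟩ => hv0 ?_
    exact hT'.left_mem_of_adj (p.adj_snd fun h => hne h.eq)
  · rcases h with h | h
    · exact Finset.mem_insert_of_mem (hT'.left_mem_of_adj h)
    · rw [edge_adj] at h
      rcases h with ⟨⟨rfl, rfl⟩ | ⟨rfl, rfl⟩, -⟩
      · exact Finset.mem_insert_self _ _
      · exact Finset.mem_insert_of_mem hu0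

lemma Reachable.deleteEdges_of_neighborSet_eq_singleton (hnb : T.neighborSet v0 = {u0})
    (h : T.Reachable v0 w) (hw : w ≠ v0) : (T.deleteEdges {s(v0, u0)}).Reachable u0 w := by
  classical
  obtain ⟨p, hp⟩ := h.some.toPath
  obtain ⟨x, hx, q, rfl⟩ := p.exists_eq_cons_of_ne hw.symm
  obtain rfl : x = u0 := by simpa [hnb] using (show x ∈ T.neighborSet v0 from hx)
  have hv0q : v0 ∉ q.support := ((Walk.cons_isPath_iff _ _).1 hp).2
  refine ⟨q.toDeleteEdges _ fun e he he' => hv0q ?_⟩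
  rw [Set.mem_singleton_iff] at he'
  subst he'
  exact q.fst_mem_support_of_mem_edges he

lemma IsSpanningTreeOn.deleteEdges [DecidableEq V] (hT : T.IsSpanningTreeOn H S) (hv0 : v0 ∈ S)
    (hnb : T.neighborSet v0 = {u0}) :
    (T.deleteEdges {s(v0, u0)}).IsSpanningTreeOn H (S.erase v0) := by
  have hreach : ∀ v ∈ S.erase v0, (T.deleteEdges {s(v0, u0)}).Reachable u0 v := fun v hv =>
    (hT.reachable v0 hv0 v (Finset.mem_of_mem_erase hv)).deleteEdges_of_neighborSet_eq_singleton
      hnb (Finset.ne_of_mem_erase hv)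
  refine ⟨(deleteEdges_le _).trans hT.le, hT.isAcyclic.anti (deleteEdges_le _),
    fun v hv w hw => (hreach v hv).symm.trans (hreach w hw), fun v w h => ?_⟩
  rw [deleteEdges_adj, Set.mem_singleton_iff] at h
  refine Finset.mem_erase.2 ⟨?_, hT.left_mem_of_adj h.1⟩
  rintro rfl
  obtain rfl : w = u0 := by simpa [hnb] using (show w ∈ T.neighborSet v from h.1)
  exact h.2 rfl

section DegreeTrees

variable [Fintype V] [DecidableEq V] {D : V → ℕ} {x y : V}

noncomputable def degreeTrees (H : SimpleGraph V) (S : Finset V) (D : V → ℕ) :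
    Finset (SimpleGraph V) := by
  classical exact {T | T.IsSpanningTreeOn H S ∧ ∀ v ∈ S, (T.neighborSet v).ncard = D v}

lemma mem_degreeTrees :
    T ∈ degreeTrees H S D ↔
      T.IsSpanningTreeOn H S ∧ ∀ v ∈ S, (T.neighborSet v).ncard = D v := by
  simp [degreeTrees]

lemma degreeTrees_singleton : degreeTrees H {x} D = if D x = 0 then {⊥} else ∅ := by
  ext T
  rw [mem_degreeTrees, isSpanningTreeOn_singleton_iff]
  split_ifs with h <;> simp +contextual [h, eq_comm (a := 0)]

lemma forall_ncard_neighborSet_sup_edge_iff (hT' : ∀ z, ¬T'.Adj v0 z) (hne : v0 ≠ u0)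
    (hv0 : v0 ∈ S) (hD0 : D v0 = 1) (hDu0 : 0 < D u0) :
    (∀ w ∈ S, ((T' ⊔ edge v0 u0).neighborSet w).ncard = D w) ↔
      ∀ w ∈ S.erase v0, (T'.neighborSet w).ncard = Function.update D u0 (D u0 - 1) w := by
  have hdeg0 : (T'.neighborSet v0).ncard = 0 := by
    rw [show T'.neighborSet v0 = ∅ from Set.eq_empty_of_forall_notMem hT', Set.ncard_empty]
  simp only [ncard_neighborSet_sup_edge hT' hne, Finset.mem_erase]
  constructor
  · rintro h w ⟨hw0, hw⟩
    have := h w hw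
    by_cases hwu : w = u0
    · subst hwu
      simp only [or_true, ↓reduceIte, Function.update_self] at this ⊢
      omega
    · simp_all
  · intro h w hw
    by_cases hw0 : w = v0
    · subst hw0
      simp [hdeg0, hD0]
    have := h w ⟨hw0, hw⟩
    by_cases hwu : w = u0
    · subst hwu
      simp only [or_true, ↓reduceIte, Function.update_self] at this ⊢
      omega
    · simp_all

open scoped Classical in
lemma card_filter_degreeTrees_neighborSet_eq (hv0 : v0 ∈ S) (hu0 : u0 ∈ S) (hadj : H.Adj v0 u0)
    (hD0 : D v0 = 1) (hDu0 : 0 < D u0) :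
    #{T ∈ degreeTrees H S D | T.neighborSet v0 = {u0}} =
      #(degreeTrees H (S.erase v0) (Function.update D u0 (D u0 - 1))) := by
  have hne := hadj.ne
  refine card_nbij' (fun T => T.deleteEdges {s(v0, u0)}) (fun T => T ⊔ edge v0 u0) ?_ ?_ ?_ ?_
  · intro T hT
    simp only [coe_filter, Set.mem_ofPred_eq, mem_degreeTrees, mem_coe] at hT ⊢
    obtain ⟨⟨hT, hdeg⟩, hnb⟩ := hT
    have hadjT : T.Adj v0 u0 := by simp [← mem_neighborSet, hnb]
    have hiso : ∀ z, ¬(T.deleteEdges {s(v0, u0)}).Adj v0 z := fun z h => by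
      rw [deleteEdges_adj] at h
      obtain rfl : z = u0 := by simpa [hnb] using (show z ∈ T.neighborSet v0 from h.1)
      exact h.2 rfl
    refine ⟨hT.deleteEdges hv0 hnb,
      (forall_ncard_neighborSet_sup_edge_iff hiso hne hv0 hD0 hDu0).1 ?_⟩
    rwa [deleteEdges_sup_edge hadjT]
  · intro T hT
    simp only [coe_filter, Set.mem_ofPred_eq, mem_degreeTrees, mem_coe] at hT ⊢
    obtain ⟨hT, hdeg⟩ := hT
    have hiso : ∀ z, ¬T.Adj v0 z := fun z h => Finset.notMem_erase v0 S (hT.left_mem_of_adj h)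
    refine ⟨⟨?_, (forall_ncard_neighborSet_sup_edge_iff hiso hne hv0 hD0 hDu0).2 hdeg⟩,
      neighborSet_sup_edge_left hiso hne⟩
    simpa [Finset.insert_erase hv0] using
      hT.sup_edge (Finset.notMem_erase v0 S) (Finset.mem_erase.2 ⟨hne.symm, hu0⟩) hadj
  · intro T hT
    simp only [coe_filter, Set.mem_ofPred_eq] at hT
    exact deleteEdges_sup_edge (by simp [← mem_neighborSet, hT.2])
  · intro T hT
    simp only [mem_coe, mem_degreeTrees] at hT
    exact sup_edge_deleteEdges fun h => Finset.notMem_erase v0 S (hT.1.left_mem_of_adj h)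

/-- Sort the trees by the neighbour `u` of the leaf `v0`: deleting the edge `s(v0, u)` leaves a tree
on `S.erase v0` in which `u` has lost one degree. -/
theorem card_degreeTrees_eq_sum_of_leaf [DecidableRel H.Adj] (hv0 : v0 ∈ S) (hD0 : D v0 = 1) :
    #(degreeTrees H S D) = ∑ u ∈ S with H.Adj v0 u ∧ 0 < D u,
      #(degreeTrees H (S.erase v0) (Function.update D u (D u - 1))) := by
  classical
  have hmaps : Set.MapsTo (fun T : SimpleGraph V => T.neighborSet v0) ↑(degreeTrees H S D)
      ↑({u ∈ S | H.Adj v0 u ∧ 0 < D u}.image ({·} : V → Set V)) := by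
    intro T hT
    obtain ⟨hT, hdeg⟩ := mem_degreeTrees.1 hT
    obtain ⟨u, hu⟩ := Set.ncard_eq_one.1 ((hdeg v0 hv0).trans hD0)
    have hadj : T.Adj v0 u := by simp [← mem_neighborSet, hu]
    have hDu : 0 < D u := by
      rw [← hdeg u (hT.right_mem_of_adj hadj)]
      exact (Set.ncard_pos).2 ⟨v0, hadj.symm⟩
    simp only [coe_image, coe_filter]
    exact ⟨u, ⟨hT.right_mem_of_adj hadj, hT.le hadj, hDu⟩, hu.symm⟩
  rw [card_eq_sum_card_fiberwise hmaps, sum_image fun _ _ _ _ h => Set.singleton_injective h]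
  refine sum_congr rfl fun u hu => ?_
  obtain ⟨hu, hadj, hDu⟩ := Finset.mem_filter.1 hu
  convert card_filter_degreeTrees_neighborSet_eq hv0 hu hadj hD0 hDu

lemma card_degreeTrees_pair [DecidableRel H.Adj] (hxy : H.Adj x y) :
    #(degreeTrees H {x, y} D) = if D x = 1 ∧ D y = 1 then 1 else 0 := by
  have hne := hxy.ne
  split_ifs with h
  · have hfilter : ({x, y} : Finset V).filter (fun u => H.Adj y u ∧ 0 < D u) = {x} := by
      ext u
      simp only [Finset.mem_filter, Finset.mem_insert, Finset.mem_singleton]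
      have := H.irrefl (v := y)
      grind [hxy.symm]
    rw [card_degreeTrees_eq_sum_of_leaf (by simp) h.2, hfilter, sum_singleton,
      Finset.erase_insert_of_ne hne, Finset.erase_singleton, insert_empty_eq,
      degreeTrees_singleton]
    simp [h.1]
  · rw [card_eq_zero, eq_empty_iff_forall_notMem]
    intro T hT
    obtain ⟨hT, hdeg⟩ := mem_degreeTrees.1 hT
    obtain ⟨a, ha, b, hb, hab, hda, hdb⟩ :=
      hT.exists_ne_ncard_neighborSet_eq_one (by simp) (by simp) hne
    simp only [Finset.mem_insert, Finset.mem_singleton] at ha hb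
    have := hdeg a (by simp [ha])
    have := hdeg b (by simp [hb])
    grind

end DegreeTrees

end SimpleGraph

section DegreeWords

variable {α β : Type*} [DecidableEq α] [DecidableEq β] {A : Finset α} {B : Finset β} {m : ℕ}
  {d : α → ℕ} {e : β → ℕ} {a : α}

def degreeWords (A : Finset α) (m : ℕ) (d : α → ℕ) : Finset (Fin m → α) :=
  {f ∈ Fintype.piFinset fun _ => A | ∀ a ∈ A, #{k | f k = a} + 1 = d a}

lemma mem_degreeWords {f : Fin m → α} :
    f ∈ degreeWords A m d ↔ (∀ k, f k ∈ A) ∧ ∀ a ∈ A, #{k | f k = a} + 1 = d a := by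
  simp [degreeWords]

lemma degreeWords_erase (ha : d a = 1) : degreeWords (A.erase a) m d = degreeWords A m d := by
  ext f
  simp only [mem_degreeWords, Finset.mem_erase]
  constructor
  · rintro ⟨hA, hd⟩
    refine ⟨fun k => (hA k).2, fun c hc => ?_⟩
    by_cases hca : c = a
    · subst hca
      simp [Finset.filter_eq_empty_iff.2 fun k _ => (hA k).1, ha]
    · exact hd c ⟨hca, hc⟩
  · rintro ⟨hA, hd⟩
    have hfa : ∀ k, f k ≠ a := fun k hk => by
      have := hd a (hk ▸ hA k)
      rw [ha, Nat.add_eq_right, Finset.card_eq_zero, Finset.filter_eq_empty_iff] at this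
      exact this (Finset.mem_univ k) hk
    exact ⟨fun k => ⟨hfa k, hA k⟩, fun c hc => hd c hc.2⟩

lemma card_degreeWords_zero : #(degreeWords A 0 d) = if ∀ a ∈ A, d a = 1 then 1 else 0 := by
  have : degreeWords A 0 d = if ∀ a ∈ A, d a = 1 then Finset.univ else ∅ := by
    ext f
    have hcount : ∀ a, #{k : Fin 0 | f k = a} = 0 := fun a => by simp
    simp only [mem_degreeWords, hcount, zero_add, IsEmpty.forall_iff, true_and]
    split_ifs with h
    · simpa [Unique.eq_default f] using fun a ha => (h a ha).symm
    · simpa using fun h' : ∀ a ∈ A, 1 = d a => h fun a ha => (h' a ha).symm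
  rw [this]
  split_ifs <;> simp

lemma card_le_of_degreeWords_nonempty (h : (degreeWords A m d).Nonempty)
    (hd : ∀ a ∈ A, d a ≠ 1) : #A ≤ m := by
  obtain ⟨f, hf⟩ := h
  obtain ⟨hA, hcount⟩ := mem_degreeWords.1 hf
  calc #A = ∑ _ ∈ A, 1 := by simp
    _ ≤ ∑ a ∈ A, #{k | f k = a} := Finset.sum_le_sum fun a ha => by
      have := hcount a ha
      have := hd a ha
      omega
    _ = m := by
      rw [← card_eq_sum_card_fiberwise fun k _ => hA k, Finset.card_univ, Fintype.card_fin]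

lemma card_filter_snoc_eq (g : Fin m → α) (c : α) :
    #{k | (Fin.snoc g a : Fin (m + 1) → α) k = c} = #{k | g k = c} + if a = c then 1 else 0 := by
  simp only [card_filter, Fin.sum_univ_castSucc, Fin.snoc_castSucc, Fin.snoc_last]

lemma snoc_mem_degreeWords_iff (ha : a ∈ A) (hda : 0 < d a) {g : Fin m → α} :
    (Fin.snoc g a : Fin (m + 1) → α) ∈ degreeWords A (m + 1) d ↔
      g ∈ degreeWords A m (Function.update d a (d a - 1)) := by
  simp only [mem_degreeWords, Fin.forall_fin_succ', Fin.snoc_castSucc, Fin.snoc_last, ha,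
    and_true, card_filter_snoc_eq]
  refine and_congr_right fun _ => forall₂_congr fun c _ => ?_
  by_cases hc : c = a
  · subst hc
    simp only [if_true, Function.update_self]
    omega
  · simp [hc, Ne.symm hc]

theorem card_degreeWords_succ :
    #(degreeWords A (m + 1) d) =
      ∑ a ∈ A with 0 < d a, #(degreeWords A m (Function.update d a (d a - 1))) := by
  have hmaps : Set.MapsTo (fun f : Fin (m + 1) → α => f (Fin.last m))
      ↑(degreeWords A (m + 1) d) ↑({a ∈ A | 0 < d a}) := by
    intro f hf
    obtain ⟨hA, hcount⟩ := mem_degreeWords.1 hf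
    simp only [coe_filter, Set.mem_ofPred_eq]
    exact ⟨hA _, by rw [← hcount _ (hA _)]; omega⟩
  rw [card_eq_sum_card_fiberwise hmaps]
  refine sum_congr rfl fun a ha => ?_
  obtain ⟨ha, hda⟩ := Finset.mem_filter.1 ha
  symm
  refine card_nbij' (fun g => Fin.snoc g a) Fin.init (fun g hg => ?_) (fun f hf => ?_)
    (fun g _ => Fin.init_snoc _ _) (fun f hf => ?_)
  · simp only [coe_filter, Set.mem_ofPred_eq, Fin.snoc_last, and_true]
    exact (snoc_mem_degreeWords_iff ha hda).2 hg
  · simp only [coe_filter, Set.mem_ofPred_eq] at hf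
    rw [mem_coe, ← snoc_mem_degreeWords_iff ha hda, ← hf.2, Fin.snoc_init_self]
    exact hf.1
  · simp only [coe_filter, Set.mem_ofPred_eq] at hf
    rw [← hf.2]
    exact Fin.snoc_init_self f

lemma card_degreeWords_mul_card_degreeWords_eq_zero (hA : A.Nonempty) (hB : B.Nonempty)
    (hleafA : ∀ a ∈ A, d a = 1 → #A < 2) (hleafB : ∀ b ∈ B, e b = 1 → #B < 2)
    (hAB : ¬(#A = 1 ∧ #B = 1)) :
    #(degreeWords A (#B - 1) d) * #(degreeWords B (#A - 1) e) = 0 := by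
  by_contra h
  obtain ⟨hwA, hwB⟩ := mul_ne_zero_iff.1 h
  have hA2 : 2 ≤ #A → #A ≤ #B - 1 := fun h2 => card_le_of_degreeWords_nonempty
    (Finset.card_ne_zero.1 hwA) fun a ha hda => by have := hleafA a ha hda; omega
  have hB2 : 2 ≤ #B → #B ≤ #A - 1 := fun h2 => card_le_of_degreeWords_nonempty
    (Finset.card_ne_zero.1 hwB) fun b hb heb => by have := hleafB b hb heb; omega
  have := Finset.card_pos.2 hA
  have := Finset.card_pos.2 hB
  omega

end DegreeWords

namespace SimpleGraph

section CompleteBipartite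

variable {α β : Type*} [Fintype α] [Fintype β] [DecidableEq α] [DecidableEq β]
  {A : Finset α} {B : Finset β} {d : α → ℕ} {e : β → ℕ}

local notation "K" => completeBipartiteGraph α β

lemma card_degreeTrees_completeBipartiteGraph_of_leaf_right {b0 : β} (hb0 : b0 ∈ B)
    (he : e b0 = 1) :
    #(degreeTrees K (A.disjSum B) (Sum.elim d e)) = ∑ a ∈ A with 0 < d a,
      #(degreeTrees K (A.disjSum (B.erase b0)) (Sum.elim (Function.update d a (d a - 1)) e)) := by
  classical
  have herase : (A.disjSum B).erase (Sum.inr b0) = A.disjSum (B.erase b0) := by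
    ext (x | x) <;> simp
  rw [card_degreeTrees_eq_sum_of_leaf (Finset.inr_mem_disjSum.2 hb0) he, sum_filter, sum_filter,
    sum_disjSum, herase]
  simp only [completeBipartiteGraph_adj, Sum.isLeft_inl, Sum.isLeft_inr, Sum.isRight_inl,
    Sum.isRight_inr, Sum.elim_inl, Sum.elim_inr, Bool.false_eq_true, false_and, and_false,
    or_false, false_or, true_and, and_true, if_false, sum_const_zero, add_zero,
    ← Sum.elim_update_left]

lemma card_degreeTrees_completeBipartiteGraph_of_leaf_left {a0 : α} (ha0 : a0 ∈ A)
    (hd : d a0 = 1) :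
    #(degreeTrees K (A.disjSum B) (Sum.elim d e)) = ∑ b ∈ B with 0 < e b,
      #(degreeTrees K ((A.erase a0).disjSum B) (Sum.elim d (Function.update e b (e b - 1)))) := by
  classical
  have herase : (A.disjSum B).erase (Sum.inl a0) = (A.erase a0).disjSum B := by
    ext (x | x) <;> simp
  rw [card_degreeTrees_eq_sum_of_leaf (Finset.inl_mem_disjSum.2 ha0) hd, sum_filter, sum_filter,
    sum_disjSum, herase]
  simp only [completeBipartiteGraph_adj, Sum.isLeft_inl, Sum.isLeft_inr, Sum.isRight_inl,
    Sum.isRight_inr, Sum.elim_inl, Sum.elim_inr, Bool.false_eq_true, false_and, and_false,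
    or_false, true_and, if_false, sum_const_zero, zero_add, ← Sum.elim_update_right]

lemma card_degreeTrees_completeBipartiteGraph_eq_zero (hA : A.Nonempty) (hB : B.Nonempty)
    (hleafA : ∀ a ∈ A, d a = 1 → #A < 2) (hleafB : ∀ b ∈ B, e b = 1 → #B < 2)
    (hAB : ¬(#A = 1 ∧ #B = 1)) :
    #(degreeTrees K (A.disjSum B) (Sum.elim d e)) = 0 := by
  rw [card_eq_zero, eq_empty_iff_forall_notMem]
  intro T hT
  obtain ⟨hT, hdeg⟩ := mem_degreeTrees.1 hT
  obtain ⟨a, ha⟩ := hA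
  obtain ⟨b, hb⟩ := hB
  obtain ⟨x, hx, y, hy, hxy, hdx, hdy⟩ := hT.exists_ne_ncard_neighborSet_eq_one
    (Finset.inl_mem_disjSum.2 ha) (Finset.inr_mem_disjSum.2 hb) Sum.inl_ne_inr
  have hx' := (hdeg x hx).symm.trans hdx
  have hy' := (hdeg y hy).symm.trans hdy
  have hA1 := Finset.card_pos.2 ⟨a, ha⟩
  have hB1 := Finset.card_pos.2 ⟨b, hb⟩
  rcases x with x | x <;> rcases y with y | y <;>
    simp only [Finset.inl_mem_disjSum, Finset.inr_mem_disjSum, Sum.elim_inl, Sum.elim_inr,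
      ne_eq, Sum.inl.injEq, Sum.inr.injEq, reduceCtorEq, not_false_eq_true] at hx hy hx' hy' hxy
  · have := hleafA x hx hx'
    have := Finset.one_lt_card.2 ⟨x, hx, y, hy, hxy⟩
    omega
  · have := hleafA x hx hx'
    have := hleafB y hy hy'
    omega
  · have := hleafB x hx hx'
    have := hleafA y hy hy'
    omega
  · have := hleafB x hx hx'
    have := Finset.one_lt_card.2 ⟨x, hx, y, hy, hxy⟩
    omega

theorem card_degreeTrees_completeBipartiteGraph (hA : A.Nonempty) (hB : B.Nonempty) :
    #(degreeTrees K (A.disjSum B) (Sum.elim d e)) =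
      #(degreeWords A (#B - 1) d) * #(degreeWords B (#A - 1) e) := by
  induction hn : #A + #B using Nat.strong_induction_on generalizing A B d e with
  | _ n ih =>
  by_cases hleafB : ∃ b0 ∈ B, e b0 = 1 ∧ 2 ≤ #B
  · obtain ⟨b0, hb0, he, hB2⟩ := hleafB
    have hcard : #(B.erase b0) = #B - 1 := card_erase_of_mem hb0
    obtain ⟨m, hm⟩ : ∃ m, #B - 1 = m + 1 := ⟨#B - 2, by omega⟩
    rw [card_degreeTrees_completeBipartiteGraph_of_leaf_right hb0 he, hm, card_degreeWords_succ,
      sum_mul, ← degreeWords_erase (A := B) he]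
    refine sum_congr rfl fun a _ => ?_
    rw [ih _ (by omega) hA (card_pos.1 (by omega)) rfl, hcard, hm, Nat.add_sub_cancel]
  by_cases hleafA : ∃ a0 ∈ A, d a0 = 1 ∧ 2 ≤ #A
  · obtain ⟨a0, ha0, hd, hA2⟩ := hleafA
    have hcard : #(A.erase a0) = #A - 1 := card_erase_of_mem ha0
    obtain ⟨m, hm⟩ : ∃ m, #A - 1 = m + 1 := ⟨#A - 2, by omega⟩
    rw [card_degreeTrees_completeBipartiteGraph_of_leaf_left ha0 hd, hm, card_degreeWords_succ,
      mul_sum, ← degreeWords_erase (A := A) hd]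
    refine sum_congr rfl fun b _ => ?_
    rw [ih _ (by omega) (card_pos.1 (by omega)) hB rfl, hcard, hm, Nat.add_sub_cancel]
  push Not at hleafA hleafB
  by_cases hAB : #A = 1 ∧ #B = 1
  · obtain ⟨a0, rfl⟩ := card_eq_one.1 hAB.1
    obtain ⟨b0, rfl⟩ := card_eq_one.1 hAB.2
    classical
    rw [show ({a0} : Finset α).disjSum {b0} = {Sum.inl a0, Sum.inr b0} by ext (x | x) <;> simp,
      card_degreeTrees_pair (by simp), card_singleton, card_singleton, Nat.sub_self,
      card_degreeWords_zero, card_degreeWords_zero]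
    by_cases hd : d a0 = 1 <;> by_cases he : e b0 = 1 <;> simp [hd, he]
  · rw [card_degreeTrees_completeBipartiteGraph_eq_zero hA hB hleafA hleafB hAB,
      card_degreeWords_mul_card_degreeWords_eq_zero hA hB hleafA hleafB hAB]

end CompleteBipartite

end SimpleGraph

lemma Finset.sum_comp_eq_of_card_filter_eq {ι κ γ M : Type*} [AddCommMonoid M] {s : Finset ι}
    {t : Finset κ} {f : ι → γ} {g : κ → γ} [DecidableEq γ]
    (h : ∀ c, #{i ∈ s | f i = c} = #{j ∈ t | g j = c}) (w : γ → M) :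
    ∑ i ∈ s, w (f i) = ∑ j ∈ t, w (g j) := by
  have hf : ∀ i ∈ s, f i ∈ s.image f ∪ t.image g := fun i hi =>
    mem_union_left _ (mem_image_of_mem f hi)
  have hg : ∀ j ∈ t, g j ∈ s.image f ∪ t.image g := fun j hj =>
    mem_union_right _ (mem_image_of_mem g hj)
  rw [← sum_fiberwise_of_maps_to' hf, ← sum_fiberwise_of_maps_to' hg]
  simp_rw [sum_const, h]

lemma Fintype.prod_pow_card_fiber {α R : Type*} [Fintype α] [DecidableEq α] [CommMonoid R]
    {n : ℕ} (x : α → R) (f : Fin n → α) : ∏ a, x a ^ #{k | f k = a} = ∏ k, x (f k) := by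
  rw [← Finset.prod_fiberwise' univ f x]
  simp_rw [prod_const]

theorem SimpleGraph.degEnum_completeBipartiteGraph {α β : Type*} [Fintype α] [Fintype β]
    [DecidableEq α] [DecidableEq β] [Nonempty α] [Nonempty β]
    (X : α → ℝ) (Y : β → ℝ) :
    degEnum (completeBipartiteGraph α β) (Sum.elim X Y) =
      (∑ a, X a) ^ (Fintype.card β - 1) * (∑ b, Y b) ^ (Fintype.card α - 1) := by
  classical
  set trees := {T : SimpleGraph (α ⊕ β) | T ≤ completeBipartiteGraph α β ∧ T.IsTree}
  let wordDegree (p : (Fin (Fintype.card β - 1) → α) × (Fin (Fintype.card α - 1) → β)) :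
      α ⊕ β → ℕ := Sum.elim (fun a => #{k | p.1 k = a} + 1) (fun b => #{k | p.2 k = b} + 1)
  have hfiber : ∀ D : α ⊕ β → ℕ,
      #{T ∈ (Set.toFinite trees).toFinset | (fun v => (T.neighborSet v).ncard) = D} =
        #{p | wordDegree p = D} := by
    intro D
    have htrees : {T ∈ (Set.toFinite trees).toFinset | (fun v => (T.neighborSet v).ncard) = D} =
        degreeTrees (completeBipartiteGraph α β) (univ.disjSum univ)
          (Sum.elim (D ∘ Sum.inl) (D ∘ Sum.inr)) := by
      ext T
      simp [trees, mem_degreeTrees, isSpanningTreeOn_univ_iff, funext_iff]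
    have hwords : ({p | wordDegree p = D} : Finset _) =
        degreeWords univ (Fintype.card β - 1) (D ∘ Sum.inl) ×ˢ
          degreeWords univ (Fintype.card α - 1) (D ∘ Sum.inr) := by
      ext p
      simp [wordDegree, mem_degreeWords, funext_iff, eq_comm]
    rw [htrees, hwords, card_product, card_degreeTrees_completeBipartiteGraph univ_nonempty
      univ_nonempty, card_univ, card_univ]
  rw [degEnum, finsum_mem_eq_finite_toFinset_sum _ (Set.toFinite trees),
    Finset.sum_comp_eq_of_card_filter_eq hfiber (fun D => ∏ v, Sum.elim X Y v ^ (D v - 1)),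
    Fintype.sum_pow, Fintype.sum_pow, sum_mul_sum, ← Fintype.sum_prod_type']
  refine sum_congr rfl fun p _ => ?_
  simp [wordDegree, Fintype.prod_sum_type, Fintype.prod_pow_card_fiber]

theorem stmt10 (s t : ℕ) (hs : 1 ≤ s) (ht : 1 ≤ t) (X : Fin s → ℝ) (Y : Fin t → ℝ) :
    degEnum (completeBipartiteGraph (Fin s) (Fin t)) (Sum.elim X Y) =
      (∑ i : Fin s, X i) ^ (t - 1) * (∑ j : Fin t, Y j) ^ (s - 1) := by
  have : Nonempty (Fin s) := Fin.pos_iff_nonempty.1 hs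
  have : Nonempty (Fin t) := Fin.pos_iff_nonempty.1 ht
  simpa using SimpleGraph.degEnum_completeBipartiteGraph X Y
end
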